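/- Let S ⊆ (0,∞) and let X be a finite ultrametric space with nonzero distances in S; set τ(X) = |cLO(X)|/|iso(X)|. Then there exists a finite ultrametric space Y with nonzero distances in S such that for every finite ultrametric space Z with nonzero distances in S there is a coloring χ of the isometric copies of X in Z with τ(X) colors with the property: for every isometric copy Ỹ of Y in Z, χ takes all τ(X) values on the copies of X contained in Ỹ. -/

import Mathlib

/-!
Let `v₀ > ⋯ > v_{m-1}` be the distances occurring in `X`, and let `Y` be the space of words of
length `m` over an alphabet with `|X| + 1` letters, two distinct words being at distance `vᵢ`
where `i` is the first position at which they differ. By induction on `m`, matching the balls of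
radius `v₀` of `X` with the blocks of words sharing their first letter, every convex ordering of
`Y` contains a copy of `X` carrying any prescribed convex ordering. Now fix a convex ordering of `Z`
and colour each copy of `X` by the `iso(X)`-orbit of the ordering it inherits. The action of
`iso(X)` on `cLO(X)` is free, so there are exactly `τ(X)` orbits, and inside any copy of `Y` each
orbit is realised.
-/

/-- A finite ultrametric space with all nonzero distances in `S`. -/
structure FinUltra (S : Set ℝ) where
  n : ℕ
  d : Fin n → Fin n → ℝ
  d_self : ∀ x, d x x = 0
  d_symm : ∀ x y, d x y = d y x
  d_mem : ∀ x y, x ≠ y → d x y ∈ S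
  ultra : ∀ x y z, d x z ≤ max (d x y) (d y z)

/-- `r` is a strict total order (irreflexive, transitive, trichotomous). -/
def IsSTO {X : Type*} (r : X → X → Prop) : Prop :=
  (∀ x, ¬ r x x) ∧ (∀ x y z, r x y → r y z → r x z) ∧ (∀ x y, r x y ∨ x = y ∨ r y x)

/-- `r` is a convex linear ordering with respect to the distance `d` : a strict total
order for which every closed metric ball is an interval (equivalently,
`r x y → r y z → d x y ≤ d x z ∧ d y z ≤ d x z`). -/
def IsConvexSTO {X : Type*} (d : X → X → ℝ) (r : X → X → Prop) : Prop :=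
  IsSTO r ∧ ∀ x y z, r x y → r y z → d x y ≤ d x z ∧ d y z ≤ d x z

/-- `A` is a copy of the ordered space `(X, rX)` inside `(Z, rZ)` : the image of an
isometric, order-preserving embedding. -/
def IsOrdCopy {S : Set ℝ} (X Z : FinUltra S) (rX : Fin X.n → Fin X.n → Prop)
    (rZ : Fin Z.n → Fin Z.n → Prop) (A : Set (Fin Z.n)) : Prop :=
  ∃ f : Fin X.n → Fin Z.n, Set.range f = A ∧
    (∀ a b, Z.d (f a) (f b) = X.d a b) ∧ (∀ a b, rX a b → rZ (f a) (f b))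

/-- `A` is an isometric copy of `X` inside `Z`. -/
def IsCopy {S : Set ℝ} (X Z : FinUltra S) (A : Set (Fin Z.n)) : Prop :=
  ∃ f : Fin X.n → Fin Z.n, Set.range f = A ∧ ∀ a b, Z.d (f a) (f b) = X.d a b

/-- The number τ(X) = |cLO(X)| / |iso(X)|. -/
noncomputable def tau (S : Set ℝ) (X : FinUltra S) : ℕ :=
  Nat.card {r : Fin X.n → Fin X.n → Prop // IsConvexSTO X.d r} /
    Nat.card {g : Fin X.n ≃ Fin X.n // ∀ a b, X.d (g a) (g b) = X.d a b}

open Function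

section StrictTotalOrder

variable {α β : Type*}

lemma IsSTO.comap {r : β → β → Prop} (hr : IsSTO r) {f : α → β} (hf : Injective f) :
    IsSTO (fun a b => r (f a) (f b)) :=
  ⟨fun a => hr.1 (f a), fun _ _ _ => hr.2.1 _ _ _,
    fun a b => (hr.2.2 (f a) (f b)).imp_right (Or.imp_left (@hf a b))⟩

lemma IsSTO.eq_of_le {r r' : α → α → Prop} (hr : IsSTO r) (hr' : IsSTO r')
    (h : ∀ a b, r a b → r' a b) : r' = r := by
  funext a b
  refine propext ⟨fun hab => ?_, h a b⟩
  rcases hr.2.2 a b with h1 | rfl | h1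
  · exact h1
  · exact absurd hab (hr'.1 a)
  · exact absurd (hr'.2.1 _ _ _ hab (h _ _ h1)) (hr'.1 a)

lemma IsSTO.isStrictTotalOrder {r : α → α → Prop} (hr : IsSTO r) :
    IsStrictTotalOrder α r where
  irrefl := hr.1
  trans := hr.2.1
  trichotomous a b h1 h2 := by rcases hr.2.2 a b with h | h | h <;> tauto

lemma IsSTO.exists_strictMono_of_card_le [Fintype α] [Fintype β] {r : α → α → Prop}
    {s : β → β → Prop} (hr : IsSTO r) (hs : IsSTO s)
    (hcard : Fintype.card α ≤ Fintype.card β) :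
    ∃ f : α → β, ∀ x y, r x y → s (f x) (f y) := by
  classical
  have := hr.isStrictTotalOrder
  have := hs.isStrictTotalOrder
  let _ : LinearOrder α := linearOrderOfSTO r
  let _ : LinearOrder β := linearOrderOfSTO s
  let eα := monoEquivOfFin α (k := Fintype.card α) rfl
  let eβ := monoEquivOfFin β (k := Fintype.card β) rfl
  exact ⟨fun x => eβ (Fin.castLE hcard (eα.symm x)),
    fun x y h => eβ.strictMono (show Fin.castLE hcard _ < Fin.castLE hcard _ from
      eα.symm.strictMono h)⟩

lemma IsSTO.eq_refl_of_iff [Finite α] {r : α → α → Prop} (hr : IsSTO r) (φ : α ≃ α)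
    (hφ : ∀ x y, r x y ↔ r (φ x) (φ y)) : φ = Equiv.refl α := by
  classical
  have := hr.isStrictTotalOrder
  let _ : LinearOrder α := linearOrderOfSTO r
  let e : α ≃o α :=
    StrictMono.orderIsoOfSurjective φ (fun x y h => (hφ x y).mp h) φ.surjective
  exact Equiv.ext fun x =>
    congrArg (fun e : α ≃o α => e x) (Subsingleton.elim e (OrderIso.refl α))

end StrictTotalOrder

structure IsUltrametric {α : Type*} (d : α → α → ℝ) : Prop where
  dist_self : ∀ x, d x x = 0
  symm : ∀ x y, d x y = d y x
  ultra : ∀ x y z, d x z ≤ max (d x y) (d y z)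

namespace IsUltrametric

variable {α β : Type*} {d : α → α → ℝ}

lemma comap (hd : IsUltrametric d) (f : β → α) : IsUltrametric (fun a b => d (f a) (f b)) :=
  ⟨fun _ => hd.dist_self _, fun _ _ => hd.symm _ _, fun _ _ _ => hd.ultra _ _ _⟩

lemma nonneg (hd : IsUltrametric d) (x y : α) : 0 ≤ d x y := by
  simpa [hd.dist_self, hd.symm y x] using hd.ultra x y x

lemma dist_lt_of_lt_of_lt (hd : IsUltrametric d) {x y z : α} {t : ℝ} (hxy : d x y < t)
    (hyz : d y z < t) : d x z < t :=
  (hd.ultra x y z).trans_lt (max_lt hxy hyz)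

lemma lt_iff_of_lt_of_lt (hd : IsUltrametric d) {a b c e : α} {t : ℝ} (hac : d a c < t)
    (hbe : d b e < t) : d a b < t ↔ d c e < t :=
  ⟨fun hab => hd.dist_lt_of_lt_of_lt (hd.dist_lt_of_lt_of_lt (hd.symm c a ▸ hac) hab) hbe,
    fun hce => hd.dist_lt_of_lt_of_lt hac (hd.dist_lt_of_lt_of_lt hce (hd.symm e b ▸ hbe))⟩

lemma dist_eq_of_dist_lt (hd : IsUltrametric d) {x y z : α} (h : d x z < d x y) :
    d y z = d x y := by
  have h1 := hd.ultra x z y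
  have h2 := hd.ultra y x z
  rw [hd.symm z y] at h1
  rw [hd.symm y x] at h2
  apply le_antisymm
  · exact h2.trans (max_le le_rfl h.le)
  · exact (le_max_iff.mp h1).resolve_left h.not_ge

def ballSetoid (hd : IsUltrametric d) {t : ℝ} (ht : 0 < t) : Setoid α where
  r x y := d x y < t
  iseqv := ⟨fun x => (hd.dist_self x).symm ▸ ht, fun h => hd.symm _ _ ▸ h,
    hd.dist_lt_of_lt_of_lt⟩

end IsUltrametric

lemma FinUltra.isUltrametric {S : Set ℝ} (X : FinUltra S) : IsUltrametric X.d :=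
  ⟨X.d_self, X.d_symm, X.ultra⟩

lemma FinUltra.dist_pos {S : Set ℝ} (hS : ∀ s ∈ S, 0 < s) (X : FinUltra S) {a b : Fin X.n}
    (h : a ≠ b) : 0 < X.d a b :=
  hS _ (X.d_mem a b h)

lemma injective_of_isometry {α β : Type*} {d : α → α → ℝ} {d' : β → β → ℝ}
    (hd' : ∀ y, d' y y = 0) (hpos : ∀ a b, a ≠ b → 0 < d a b) {f : α → β}
    (hf : ∀ a b, d' (f a) (f b) = d a b) : Injective f := by
  intro a b hab
  by_contra hne
  have := hf a b
  rw [hab, hd'] at this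
  exact (hpos a b hne).ne this

namespace IsConvexSTO

variable {α β : Type*} {d : α → α → ℝ} {r : α → α → Prop}

lemma comap {d' : β → β → ℝ} (hr : IsConvexSTO d r) {f : β → α} (hf : Injective f)
    (hfd : ∀ a b, d (f a) (f b) = d' a b) : IsConvexSTO d' (fun a b => r (f a) (f b)) :=
  ⟨hr.1.comap hf, fun a b c hab hbc => by simpa only [hfd] using hr.2 _ _ _ hab hbc⟩

lemma rel_of_dist_lt (hd : IsUltrametric d) (hr : IsConvexSTO d r) {t : ℝ} {a b c e : α}
    (hac : d a c < t) (hbe : d b e < t) (hab : ¬ d a b < t) (h : r a b) : r c e := by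
  have hce : ¬ d c e < t := (hd.lt_iff_of_lt_of_lt hac hbe).not.mp hab
  rcases hr.1.2.2 c e with hce' | rfl | hec
  · exact hce'
  · exact absurd ((hd.dist_self c).trans_lt ((hd.nonneg a c).trans_lt hac)) hce
  · exfalso
    apply hab
    rcases hr.1.2.2 a e with hae | rfl | hea
    · exact hd.dist_lt_of_lt_of_lt ((hr.2 a e c hae hec).1.trans_lt hac) (hd.symm e b ▸ hbe)
    · exact hd.symm b a ▸ hbe
    · exact (hr.2 e a b hea h).2.trans_lt (hd.symm e b ▸ hbe)

end IsConvexSTO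

section ExistsConvexOrder

variable {α β : Type*} {d : α → α → ℝ}

lemma isConvexSTO_of_label [LinearOrder β] (hd : IsUltrametric d) (c : α → ℝ → β)
    (hc : ∀ x y t, d x y < t → c x t = c y t)
    (hsep : ∀ x y, x ≠ y → c x (d x y) ≠ c y (d x y)) :
    IsConvexSTO d (fun x y => c x (d x y) < c y (d x y)) := by
  have base_not_lt : ∀ x y z, c x (d x y) < c y (d x y) → c y (d y z) < c z (d y z) →
      d x y = d y z → ¬ d x z < d x y := fun x y z hxy hyz heq hlt =>
    (hxy.trans (heq ▸ hyz)).ne (hc x z _ hlt)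
  have convex : ∀ x y z, c x (d x y) < c y (d x y) → c y (d y z) < c z (d y z) →
      d x y ≤ d x z ∧ d y z ≤ d x z := fun x y z hxy hyz => by
    constructor
    · by_contra! hlt
      exact base_not_lt x y z hxy hyz (hd.dist_eq_of_dist_lt hlt).symm hlt
    · by_contra! hlt
      have heq : d x y = d y z := by
        have := hd.dist_eq_of_dist_lt (x := z) (y := y) (z := x)
          (by rwa [hd.symm z x, hd.symm z y])
        rwa [hd.symm y x, hd.symm z y] at this
      exact base_not_lt x y z hxy hyz heq (heq ▸ hlt)
  refine ⟨⟨fun x => lt_irrefl _, fun x y z hxy hyz => ?_, fun x y => ?_⟩, convex⟩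
  · beta_reduce at hxy hyz ⊢
    obtain ⟨h1, h2⟩ := convex x y z hxy hyz
    rcases h1.lt_or_eq with h1 | h1 <;> rcases h2.lt_or_eq with h2 | h2
    · exact absurd (hd.ultra x y z) (max_lt h1 h2).not_ge
    · rw [← h2, hc x y _ (h2 ▸ h1)]; exact hyz
    · rw [← h1, ← hc y z _ (h1 ▸ h2)]; exact hxy
    · rw [h2, ← h1] at hyz; rw [← h1]; exact hxy.trans hyz
  · by_cases hxy : x = y
    · exact Or.inr (Or.inl hxy)
    · show _ ∨ _ ∨ c y (d y x) < c x (d y x)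
      rw [hd.symm y x]
      exact ((hsep x y hxy).lt_or_gt).imp id Or.inr

lemma exists_isConvexSTO [Fintype α] [LinearOrder α] (hd : IsUltrametric d)
    (hpos : ∀ x y, x ≠ y → 0 < d x y) : ∃ r : α → α → Prop, IsConvexSTO d r := by
  classical
  let ball : α → ℝ → Finset α := fun x t => Finset.univ.filter (fun z => d x z < t)
  have ball_eq : ∀ x y t, d x y < t → ball x t = ball y t := fun x y t hxy => by
    ext z
    simp only [ball, Finset.mem_filter, Finset.mem_univ, true_and]
    exact ⟨hd.dist_lt_of_lt_of_lt (hd.symm x y ▸ hxy), hd.dist_lt_of_lt_of_lt hxy⟩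
  refine ⟨_, isConvexSTO_of_label hd (fun x t => (ball x t).min) (fun x y t h => by
    rw [ball_eq x y t h]) fun x y hxy heq => ?_⟩
  obtain ⟨a, ha⟩ := Finset.min_of_mem (s := ball x (d x y)) (a := x)
    (by simpa [ball, hd.dist_self] using hpos x y hxy)
  have hax := Finset.mem_of_min ha
  have hay := Finset.mem_of_min (heq ▸ ha)
  simp only [ball, Finset.mem_filter, Finset.mem_univ, true_and] at hax hay
  exact lt_irrefl _ (hd.dist_lt_of_lt_of_lt hax (hd.symm y a ▸ hay))

end ExistsConvexOrder

section WordSpace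

variable {A : Type*} [DecidableEq A]

noncomputable def wordDist :
    {m : ℕ} → (Fin m → ℝ) → (Fin m → A) → (Fin m → A) → ℝ
  | 0, _, _, _ => 0
  | _ + 1, v, x, y =>
    if x 0 = y 0 then wordDist (Fin.tail v) (Fin.tail x) (Fin.tail y) else v 0

lemma wordDist_succ {m : ℕ} (v : Fin (m + 1) → ℝ) (x y : Fin (m + 1) → A) :
    wordDist v x y = if x 0 = y 0 then wordDist (Fin.tail v) (Fin.tail x) (Fin.tail y) else v 0 :=
  rfl

@[simp]
lemma wordDist_cons_cons {m : ℕ} (v : Fin (m + 1) → ℝ) (a : A) (s t : Fin m → A) :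
    wordDist v (Fin.cons a s) (Fin.cons a t) = wordDist (Fin.tail v) s t := by
  simp [wordDist_succ]

lemma wordDist_self {m : ℕ} (v : Fin m → ℝ) (x : Fin m → A) : wordDist v x x = 0 := by
  induction m with
  | zero => rfl
  | succ m ih => simp [wordDist_succ, ih]

lemma wordDist_comm {m : ℕ} (v : Fin m → ℝ) (x y : Fin m → A) :
    wordDist v x y = wordDist v y x := by
  induction m with
  | zero => rfl
  | succ m ih => simp only [wordDist_succ, eq_comm (a := x 0), ih]

lemma wordDist_mem_range {m : ℕ} (v : Fin m → ℝ) {x y : Fin m → A} (hxy : x ≠ y) :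
    wordDist v x y ∈ Set.range v := by
  induction m with
  | zero => exact absurd (Subsingleton.elim x y) hxy
  | succ m ih =>
    rw [wordDist_succ]
    split_ifs with h0
    · have htail : Fin.tail x ≠ Fin.tail y := fun h =>
        hxy (by rw [← Fin.cons_self_tail x, ← Fin.cons_self_tail y, h0, h])
      obtain ⟨i, hi⟩ := ih (Fin.tail v) htail
      exact ⟨i.succ, hi⟩
    · exact ⟨0, rfl⟩

variable {m : ℕ}

lemma wordDist_tail_lt_head {v : Fin (m + 1) → ℝ} (hv : StrictAnti v) (hpos : ∀ i, 0 < v i)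
    (s t : Fin m → A) : wordDist (Fin.tail v) s t < v 0 := by
  by_cases hst : s = t
  · rw [hst, wordDist_self]; exact hpos 0
  · obtain ⟨i, hi⟩ := wordDist_mem_range (Fin.tail v) hst
    exact hi ▸ hv (Fin.succ_pos i)

lemma wordDist_lt_head_iff {v : Fin (m + 1) → ℝ} (hv : StrictAnti v) (hpos : ∀ i, 0 < v i)
    (x y : Fin (m + 1) → A) : wordDist v x y < v 0 ↔ x 0 = y 0 := by
  rw [wordDist_succ]
  split_ifs with h0
  · exact iff_of_true (wordDist_tail_lt_head hv hpos _ _) h0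
  · exact iff_of_false (lt_irrefl _) h0

lemma isUltrametric_wordDist {v : Fin m → ℝ} (hv : StrictAnti v) (hpos : ∀ i, 0 < v i) :
    IsUltrametric (wordDist (A := A) v) := by
  refine ⟨wordDist_self v, wordDist_comm v, ?_⟩
  induction m with
  | zero => intro x y z; simp [wordDist]
  | succ m ih =>
    intro x y z
    by_cases h : x 0 = y 0 ∧ y 0 = z 0
    · rw [wordDist_succ, wordDist_succ, wordDist_succ, if_pos h.1, if_pos h.2,
        if_pos (h.1.trans h.2)]
      exact ih (hv.comp_strictMono Fin.strictMono_succ) (fun i => hpos i.succ) _ _ _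
    · have lhs : wordDist v x z ≤ v 0 := by
        rw [wordDist_succ]
        split_ifs
        exacts [(wordDist_tail_lt_head hv hpos _ _).le, le_rfl]
      have rhs : v 0 ≤ max (wordDist v x y) (wordDist v y z) := by
        rcases not_and_or.mp h with h | h
        · exact le_max_of_le_left (by rw [wordDist_succ, if_neg h])
        · exact le_max_of_le_right (by rw [wordDist_succ, if_neg h])
      exact lhs.trans rhs

lemma IsConvexSTO.rel_of_rel_cons {m : ℕ} {v : Fin (m + 1) → ℝ} (hv : StrictAnti v)
    (hpos : ∀ i, 0 < v i) {R : (Fin (m + 1) → A) → (Fin (m + 1) → A) → Prop}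
    (hR : IsConvexSTO (wordDist v) R) {z : Fin m → A} {u u' : Fin (m + 1) → A}
    (h : R (Fin.cons (u 0) z) (Fin.cons (u' 0) z)) : R u u' := by
  have head_eq : ∀ x y : Fin (m + 1) → A, wordDist v x y < v 0 ↔ x 0 = y 0 :=
    wordDist_lt_head_iff hv hpos
  refine hR.rel_of_dist_lt (isUltrametric_wordDist hv hpos) (a := Fin.cons (u 0) z)
    (b := Fin.cons (u' 0) z) ((head_eq _ _).mpr rfl)
    ((head_eq _ _).mpr rfl) (fun hfar => ?_) h
  have h0 : u 0 = u' 0 := by simpa using (head_eq _ _).mp hfar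
  exact hR.1.1 _ (h0 ▸ h)

end WordSpace

namespace IsConvexSTO

variable {α β : Type*} {d : α → α → ℝ} {r : α → α → Prop}

lemma exists_blockMap [Fintype α] [Fintype β] (hd : IsUltrametric d) (hr : IsConvexSTO d r)
    {t : ℝ} (ht : 0 < t) {s : β → β → Prop} (hs : IsSTO s)
    (hcard : Fintype.card α ≤ Fintype.card β) :
    ∃ e : α → β, (∀ a b, d a b < t → e a = e b) ∧
      ∀ a b, ¬ d a b < t → r a b → s (e a) (e b) := by
  classical
  let B := hd.ballSetoid ht
  let rB : Quotient B → Quotient B → Prop :=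
    Quotient.lift₂ (fun x y => ¬ d x y < t ∧ r x y) fun a b c e (hac : d a c < t) hbe =>
      propext ⟨fun ⟨hab, h⟩ =>
          ⟨(hd.lt_iff_of_lt_of_lt hac hbe).not.mp hab, hr.rel_of_dist_lt hd hac hbe hab h⟩,
        fun ⟨hce, h⟩ => ⟨(hd.lt_iff_of_lt_of_lt hac hbe).not.mpr hce,
          hr.rel_of_dist_lt hd (hd.symm a c ▸ hac) (hd.symm b e ▸ hbe) hce h⟩⟩
  have hrB : IsSTO rB := by
    refine ⟨fun p => ?_, fun p q o => ?_, fun p q => ?_⟩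
    · induction p using Quotient.inductionOn with
      | h a => exact fun h => h.1 (B.refl a)
    · induction p using Quotient.inductionOn with | h a =>
      induction q using Quotient.inductionOn with | h b =>
      induction o using Quotient.inductionOn with | h c =>
      exact fun ⟨_, hab⟩ ⟨hbc, hbc'⟩ =>
        ⟨fun hac => hbc ((hr.2 a b c hab hbc').2.trans_lt hac), hr.1.2.1 a b c hab hbc'⟩
    · induction p using Quotient.inductionOn with | h a =>
      induction q using Quotient.inductionOn with | h b =>
      by_cases hab : d a b < t
      · exact Or.inr (Or.inl (Quotient.sound hab))
      · rcases hr.1.2.2 a b with h | rfl | h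
        · exact Or.inl ⟨hab, h⟩
        · exact absurd (B.refl a) hab
        · exact Or.inr (Or.inr ⟨fun hba => hab (B.symm hba), h⟩)
  obtain ⟨emb, hemb⟩ := hrB.exists_strictMono_of_card_le hs
    ((Fintype.card_quotient_le B).trans hcard)
  exact ⟨fun a => emb ⟦a⟧, fun a b hab => congrArg emb (Quotient.sound hab),
    fun a b hab h => hemb _ _ ⟨hab, h⟩⟩

end IsConvexSTO

section OrderedEmbedding

variable {A : Type*} [DecidableEq A] {α : Type*} {d : α → α → ℝ} {r : α → α → Prop}

lemma mem_range_tail_of_lt_head {m : ℕ} {v : Fin (m + 1) → ℝ} {w : ℝ}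
    (hw : w ∈ Set.range v) (hlt : w < v 0) : w ∈ Set.range (Fin.tail v) := by
  obtain ⟨i, rfl⟩ := hw
  induction i using Fin.cases with
  | zero => exact absurd hlt (lt_irrefl _)
  | succ j => exact ⟨j, rfl⟩

lemma exists_isometry_rel_of_balls {m : ℕ} {v : Fin (m + 1) → ℝ} (hv : StrictAnti v)
    (hpos : ∀ i, 0 < v i) (hd : IsUltrametric d)
    (hrange : ∀ a b, a ≠ b → d a b ∈ Set.range v) (hr : IsConvexSTO d r)
    {R : (Fin (m + 1) → A) → (Fin (m + 1) → A) → Prop}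
    (hR : IsConvexSTO (wordDist v) R) {z : Fin m → A} {e : α → A}
    (he_eq : ∀ a b, d a b < v 0 → e a = e b)
    (he_rel : ∀ a b, ¬ d a b < v 0 → r a b → R (Fin.cons (e a) z) (Fin.cons (e b) z))
    {g : α → α → Fin m → A} (hg : ∀ x a b, d x a < v 0 → d x b < v 0 →
      wordDist (Fin.tail v) (g x a) (g x b) = d a b ∧
        (r a b → R (Fin.cons (e a) (g x a)) (Fin.cons (e a) (g x b)))) :
    ∃ f : α → Fin (m + 1) → A,
      (∀ a b, wordDist v (f a) (f b) = d a b) ∧ ∀ a b, r a b → R (f a) (f b) := by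
  have ht : 0 < v 0 := hpos 0
  let rep : α → α := fun y => (Quotient.mk (hd.ballSetoid ht) y).out
  have hrep : ∀ y, d (rep y) y < v 0 := fun y => Quotient.mk_out (s := hd.ballSetoid ht) y
  have hrep_eq : ∀ a b, d a b < v 0 → rep a = rep b := fun a b h =>
    congrArg Quotient.out (Quotient.sound h)
  -- points of a common ball are all embedded by the map chosen for its representative
  have close := fun a b (hab : d a b < v 0) => hg (rep a) a b (hrep a) (hrep_eq a b hab ▸ hrep b)
  refine ⟨fun y => Fin.cons (e y) (g (rep y) y), fun a b => ?_, fun a b hab => ?_⟩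
  · show wordDist v (Fin.cons (e a) _) (Fin.cons (e b) _) = d a b
    by_cases hclose : d a b < v 0
    · rw [← he_eq a b hclose, ← hrep_eq a b hclose, wordDist_cons_cons]
      exact (close a b hclose).1
    · have hab : a ≠ b := by rintro rfl; exact hclose ((hd.dist_self a).trans_lt ht)
      have hne : e a ≠ e b := by
        rcases hr.1.2.2 a b with h | h | h
        · exact fun he => hR.1.1 _ (he ▸ he_rel a b hclose h)
        · exact absurd h hab
        · exact fun he => hR.1.1 _ (he ▸ he_rel b a (hd.symm a b ▸ hclose) h)
      obtain ⟨i, hi⟩ := hrange a b hab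
      rw [wordDist_succ, Fin.cons_zero, Fin.cons_zero, if_neg hne, ← hi]
      exact le_antisymm ((not_lt.mp hclose).trans hi.ge) (hv.antitone (Fin.zero_le i))
  · show R (Fin.cons (e a) _) (Fin.cons (e b) _)
    by_cases hclose : d a b < v 0
    · rw [← he_eq a b hclose, ← hrep_eq a b hclose]
      exact (close a b hclose).2 hab
    · exact hR.rel_of_rel_cons hv hpos (he_rel a b hclose hab)

variable [Fintype A] [Nonempty A]

theorem exists_isometry_rel_wordDist {m : ℕ} {v : Fin m → ℝ} (hv : StrictAnti v)
    (hpos : ∀ i, 0 < v i) [Fintype α] (hd : IsUltrametric d)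
    (hcard : Fintype.card α ≤ Fintype.card A)
    (hrange : ∀ a b, a ≠ b → d a b ∈ Set.range v) (hr : IsConvexSTO d r)
    {R : (Fin m → A) → (Fin m → A) → Prop}
    (hR : IsConvexSTO (wordDist v) R) :
    ∃ f : α → Fin m → A,
      (∀ a b, wordDist v (f a) (f b) = d a b) ∧ ∀ a b, r a b → R (f a) (f b) := by
  classical
  induction m generalizing α with
  | zero =>
    have hsub : Subsingleton α :=
      ⟨fun a b => by_contra fun h => (hrange a b h).elim (·.elim0)⟩
    refine ⟨fun _ => Fin.elim0, fun a b => ?_, fun a b h => ?_⟩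
    · rw [Subsingleton.elim a b, wordDist_self, hd.dist_self]
    · exact absurd h (Subsingleton.elim a b ▸ hr.1.1 a)
  | succ m ih =>
    let z : Fin m → A := fun _ => Classical.arbitrary A
    have hs : IsSTO (fun j j' => R (Fin.cons j z) (Fin.cons j' z)) :=
      hR.1.comap (Fin.cons_left_injective (α := fun _ => A) z)
    obtain ⟨e, he_eq, he_rel⟩ := hr.exists_blockMap hd (hpos 0) hs hcard
    have ball : ∀ x, ∃ g : α → Fin m → A, ∀ a b, d x a < v 0 → d x b < v 0 →
        wordDist (Fin.tail v) (g a) (g b) = d a b ∧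
          (r a b → R (Fin.cons (e a) (g a)) (Fin.cons (e a) (g b))) := by
      intro x
      obtain ⟨g, hgd, hgr⟩ := ih (hv.comp_strictMono Fin.strictMono_succ)
        (fun i => hpos i.succ) (α := {y // d x y < v 0}) (hd.comap Subtype.val)
        ((Fintype.card_subtype_le _).trans hcard)
        (fun a b hab => mem_range_tail_of_lt_head (hrange a b (Subtype.coe_ne_coe.mpr hab))
          (hd.dist_lt_of_lt_of_lt (hd.symm a x ▸ a.2) b.2))
        (hr.comap Subtype.val_injective fun _ _ => rfl)
        (hR.comap (Fin.cons_right_injective (α := fun _ => A) (e x))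
          fun _ _ => wordDist_cons_cons v (e x) _ _)
      refine ⟨fun y => if h : d x y < v 0 then g ⟨y, h⟩ else z, fun a b ha hb => ?_⟩
      simp only [dif_pos ha, dif_pos hb, ← he_eq x a ha]
      exact ⟨hgd ⟨a, ha⟩ ⟨b, hb⟩, hgr ⟨a, ha⟩ ⟨b, hb⟩⟩
    choose g hg using ball
    exact exists_isometry_rel_of_balls hv hpos hd hrange hr hR he_eq he_rel hg

end OrderedEmbedding

section IsometryGroup

variable {α β : Type*} (d : α → α → ℝ)

def isometryGroup : Subgroup (Equiv.Perm α) where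
  carrier := {g | ∀ a b, d (g a) (g b) = d a b}
  mul_mem' hg hh a b := (hg _ _).trans (hh a b)
  one_mem' _ _ := rfl
  inv_mem' {g} hg a b := by simpa using (hg (g⁻¹ a) (g⁻¹ b)).symm

abbrev ConvexOrder := {r : α → α → Prop // IsConvexSTO d r}

variable {d}

def ConvexOrder.comap {d' : β → β → ℝ} (R : ConvexOrder d') (f : α → β)
    (hf : Injective f) (hfd : ∀ a b, d' (f a) (f b) = d a b) : ConvexOrder d :=
  ⟨fun a b => R.1 (f a) (f b), R.2.comap hf hfd⟩

instance : MulAction (isometryGroup d) (ConvexOrder d) where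
  smul g r := r.comap (g⁻¹ : isometryGroup d).1 (Equiv.injective _) (g⁻¹ : isometryGroup d).2
  one_smul _ := rfl
  mul_smul _ _ _ := rfl

lemma stabilizer_convexOrder_eq_bot [Finite α] (r : ConvexOrder d) :
    MulAction.stabilizer (isometryGroup d) r = ⊥ := by
  ext g
  refine ⟨fun hg => ?_, fun hg => by rw [Subgroup.mem_bot.mp hg]; exact one_smul _ r⟩
  have hφ : ∀ x y,
      r.1 x y ↔ r.1 ((g⁻¹ : isometryGroup d).1 x) ((g⁻¹ : isometryGroup d).1 y) :=
    fun x y => by rw [← congrFun (congrFun (congrArg Subtype.val hg) x) y]; rfl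
  rw [Subgroup.mem_bot, ← inv_eq_one]
  exact Subtype.ext (r.2.1.eq_refl_of_iff _ hφ)

lemma card_convexOrder [Finite α] :
    Nat.card (ConvexOrder d) = Nat.card (MulAction.orbitRel.Quotient (isometryGroup d)
      (ConvexOrder d)) * Nat.card (isometryGroup d) := by
  rw [Nat.card_congr (MulAction.selfEquivOrbitsQuotientProd stabilizer_convexOrder_eq_bot),
    Nat.card_prod]

lemma exists_equiv_comp_eq {f f' : α → β} (hf : Injective f) (hf' : Injective f')
    (h : Set.range f' = Set.range f) : ∃ σ : α ≃ α, ∀ a, f (σ a) = f' a :=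
  ⟨(Equiv.ofInjective f' hf').trans ((Equiv.setCongr h).trans (Equiv.ofInjective f hf).symm),
    fun _ => Equiv.apply_ofInjective_symm hf _⟩

lemma orbit_comap_eq_of_range_eq {d' : β → β → ℝ} (R : ConvexOrder d') {f f' : α → β}
    (hf : Injective f) (hf' : Injective f') (hfd : ∀ a b, d' (f a) (f b) = d a b)
    (hfd' : ∀ a b, d' (f' a) (f' b) = d a b) (h : Set.range f' = Set.range f) :
    (⟦R.comap f hf hfd⟧ : MulAction.orbitRel.Quotient (isometryGroup d) (ConvexOrder d)) =
      ⟦R.comap f' hf' hfd'⟧ := by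
  obtain ⟨σ, hσ⟩ := exists_equiv_comp_eq hf' hf h.symm
  have hσd : σ ∈ isometryGroup d := fun a b => by rw [← hfd', hσ, hσ, hfd]
  refine Quotient.sound ⟨⟨σ, hσd⟩⁻¹, Subtype.ext ?_⟩
  funext a b
  show R.1 (f' (σ a)) (f' (σ b)) = R.1 (f a) (f b)
  rw [hσ, hσ]

end IsometryGroup

lemma Finset.exists_strictAnti_range_eq {β : Type*} [LinearOrder β] (s : Finset β) :
    ∃ v : Fin s.card → β, StrictAnti v ∧ Set.range v = s :=
  ⟨s.orderEmbOfFin rfl ∘ Fin.rev,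
    (s.orderEmbOfFin rfl).strictMono.comp_strictAnti Fin.rev_strictAnti,
    by rw [Fin.rev_surjective.range_comp, Finset.range_orderEmbOfFin]⟩

namespace FinUltra

variable {S : Set ℝ}

lemma tau_eq_card_orbits (X : FinUltra S) :
    tau S X = Nat.card (MulAction.orbitRel.Quotient (isometryGroup X.d) (ConvexOrder X.d)) :=
  Nat.div_eq_of_eq_mul_left (Nat.card_pos (α := isometryGroup X.d)) card_convexOrder

def ofEquiv {α : Type*} {n : ℕ} (e : α ≃ Fin n) {d : α → α → ℝ} (hd : IsUltrametric d)
    (hS : ∀ x y, x ≠ y → d x y ∈ S) : FinUltra S where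
  n := n
  d p q := d (e.symm p) (e.symm q)
  d_self _ := hd.dist_self _
  d_symm _ _ := hd.symm _ _
  d_mem _ _ h := hS _ _ (e.symm.injective.ne h)
  ultra _ _ _ := hd.ultra _ _ _

def IsOrderUniversal (X Y : FinUltra S) : Prop :=
  ∀ (R : ConvexOrder Y.d) (r : ConvexOrder X.d), ∃ A, IsOrdCopy X Y r.1 R.1 A

theorem exists_isOrderUniversal (X : FinUltra S) (hX : ∀ a b, a ≠ b → 0 < X.d a b) :
    ∃ Y : FinUltra S, IsOrderUniversal X Y := by
  classical
  let D : Finset ℝ := Finset.univ.offDiag.image fun p : Fin X.n × Fin X.n => X.d p.1 p.2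
  have hD : ∀ w ∈ D, w ∈ S ∧ 0 < w := fun w hw => by
    obtain ⟨⟨a, b⟩, hab, rfl⟩ := Finset.mem_image.mp hw
    have hab : a ≠ b := (Finset.mem_offDiag.mp hab).2.2
    exact ⟨X.d_mem a b hab, hX a b hab⟩
  obtain ⟨v, hv, hvD⟩ := D.exists_strictAnti_range_eq
  have hvmem : ∀ i, v i ∈ D := fun i => Finset.mem_coe.mp (hvD ▸ Set.mem_range_self i)
  have hpos : ∀ i, 0 < v i := fun i => (hD _ (hvmem i)).2
  let e : (Fin D.card → Fin (X.n + 1)) ≃ Fin ((X.n + 1) ^ D.card) := finFunctionFinEquiv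
  refine ⟨ofEquiv e (isUltrametric_wordDist hv hpos) fun x y hxy => ?_, fun R r => ?_⟩
  · obtain ⟨i, hi⟩ := wordDist_mem_range v hxy
    exact hi ▸ (hD _ (hvmem i)).1
  obtain ⟨f, hfd, hfr⟩ := exists_isometry_rel_wordDist hv hpos X.isUltrametric
    (by simp) (fun a b hab => by
      rw [hvD]; exact Finset.mem_image.mpr ⟨(a, b), by simpa using hab, rfl⟩) r.2
    (R.comap e e.injective fun _ _ => by simp [ofEquiv]).2
  exact ⟨_, e ∘ f, rfl, fun a b => by simpa [ofEquiv] using hfd a b, hfr⟩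

theorem IsOrderUniversal.exists_coloring (hS : ∀ s ∈ S, 0 < s) {X Y : FinUltra S}
    (hY : IsOrderUniversal X Y) (Z : FinUltra S) :
    ∃ χ : Set (Fin Z.n) → MulAction.orbitRel.Quotient (isometryGroup X.d) (ConvexOrder X.d),
      ∀ B, IsCopy Y Z B → ∀ c, ∃ A, IsCopy X Z A ∧ A ⊆ B ∧ χ A = c := by
  classical
  have inj : ∀ {T : FinUltra S} {f : Fin T.n → Fin Z.n},
      (∀ a b, Z.d (f a) (f b) = T.d a b) → Injective f :=
    fun {T} _ hf => injective_of_isometry Z.d_self (fun _ _ => T.dist_pos hS) hf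
  obtain ⟨rZ, hrZ⟩ := exists_isConvexSTO Z.isUltrametric fun _ _ => Z.dist_pos hS
  obtain ⟨r₀, hr₀⟩ := exists_isConvexSTO X.isUltrametric fun _ _ => X.dist_pos hS
  let RZ : ConvexOrder Z.d := ⟨rZ, hrZ⟩
  let χ : Set (Fin Z.n) → MulAction.orbitRel.Quotient (isometryGroup X.d) (ConvexOrder X.d) :=
    fun A => if h : IsCopy X Z A then ⟦RZ.comap h.choose (inj h.choose_spec.2) h.choose_spec.2⟧
      else ⟦⟨r₀, hr₀⟩⟧
  refine ⟨χ, ?_⟩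
  rintro B ⟨g, rfl, hg⟩ c
  obtain ⟨_, f, -, hfd, hfr⟩ := hY (RZ.comap g (inj hg) hg) c.out
  have hw : ∀ a b, Z.d (g (f a)) (g (f b)) = X.d a b := fun a b => (hg _ _).trans (hfd a b)
  have hA : IsCopy X Z (Set.range (g ∘ f)) := ⟨g ∘ f, rfl, hw⟩
  have hc : RZ.comap (g ∘ f) (inj hw) hw = c.out :=
    Subtype.ext (c.out.2.1.eq_of_le (RZ.comap _ (inj hw) hw).2.1 hfr)
  refine ⟨_, hA, Set.range_comp_subset_range f g, ?_⟩
  simp only [χ, dif_pos hA]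
  rw [orbit_comap_eq_of_range_eq RZ (f' := g ∘ f) _ (inj hw) _ hw hA.choose_spec.1.symm, hc,
    Quotient.out_eq]

end FinUltra

/-- There is `Y` such that in any `Z`, some coloring of the copies of `X` with τ(X)
colors takes all τ(X) values on the copies of `X` inside any copy of `Y`. -/
theorem tau_is_lower_bound_for_ramsey_degree
    (S : Set ℝ) (hSpos : ∀ s ∈ S, 0 < s) (X : FinUltra S) :
    ∃ Y : FinUltra S, ∀ Z : FinUltra S,
      ∃ χ : Set (Fin Z.n) → Fin (tau S X),
        ∀ B : Set (Fin Z.n), IsCopy Y Z B →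
          ∀ c : Fin (tau S X), ∃ A : Set (Fin Z.n), IsCopy X Z A ∧ A ⊆ B ∧ χ A = c := by
  obtain ⟨Y, hY⟩ := X.exists_isOrderUniversal fun _ _ => X.dist_pos hSpos
  refine ⟨Y, fun Z => ?_⟩
  obtain ⟨χ, hχ⟩ := hY.exists_coloring hSpos Z
  let ψ := Finite.equivFinOfCardEq X.tau_eq_card_orbits.symm
  refine ⟨ψ ∘ χ, fun B hB c => ?_⟩
  obtain ⟨A, hA, hAB, hAc⟩ := hχ B hB (ψ.symm c)
  exact ⟨A, hA, hAB, by simp [hAc]⟩
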